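/- Special case of the determinant integral identity (p = n, no constant border): for functions Φ_i, Ψ_j, ξ, ξ̃ : [a,b] → ℝ integrable as needed, ∫_{b ≥ x_1 ≥ … ≥ x_n ≥ a} det[Φ_i(x_j)] det[Ψ_i(x_j)] ∏_{m=1}^n ξ(x_m) · Σ_{i=1}^n ξ̃(x_i) dx = Σ_{k=1}^n det[ ∫_a^b Φ_i(x) Ψ_j(x) ξ(x) (ξ̃(x) if j = k else 1) dx ]_{i,j=1}^n. -/

import Mathlib

/-!
Since `(∏ₘ ξ(xₘ)) · Σᵢ ξ̃(xᵢ) = Σₖ ∏ⱼ ξ(xⱼ) ξ̃(xⱼ)^[j = k]` and the product of the two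
determinants is invariant under permuting the coordinates, the integrand is symmetric, so its
integral over the ordered region is `1/n!` times its integral over the cube `[a, b]ⁿ`. On the cube,
expanding both determinants (Andréief) turns the `k`-th term into `Σ_τ det B_(τ k)`, where `Bₗ` is
the matrix on the right-hand side; summing over `k`, each of the `n!` permutations `τ` contributes
`Σₖ det Bₖ`.
-/

open MeasureTheory Matrix Finset

lemma prod_mul_sum_eq_sum_prod_ite {ι R : Type*} [Fintype ι] [DecidableEq ι] [CommSemiring R]
    (u v : ι → R) : (∏ j, u j) * ∑ k, v k = ∑ k, ∏ j, u j * if j = k then v j else 1 := by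
  simp only [mul_sum, prod_mul_distrib, prod_ite_eq', mem_univ, if_true]

section Algebra

variable {n : ℕ} {R : Type*} [CommRing R]

lemma det_mul_det_mul_prod_eq_sum (A B : Matrix (Fin n) (Fin n) R) (w : Fin n → R) :
    A.det * B.det * ∏ j, w j = ∑ σ : Equiv.Perm (Fin n), ∑ τ : Equiv.Perm (Fin n),
      (Equiv.Perm.sign σ : R) * Equiv.Perm.sign τ * ∏ j, A (σ j) j * B (τ j) j * w j := by
  rw [det_apply', det_apply', sum_mul_sum, sum_mul]
  refine sum_congr rfl fun σ _ => ?_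
  rw [sum_mul]
  refine sum_congr rfl fun τ _ => ?_
  rw [prod_mul_distrib, prod_mul_distrib]
  ring

lemma sum_sign_mul_sign_mul_prod_eq_sum_det (M : Fin n → Matrix (Fin n) (Fin n) R) :
    ∑ σ : Equiv.Perm (Fin n), ∑ τ : Equiv.Perm (Fin n),
        (Equiv.Perm.sign σ : R) * Equiv.Perm.sign τ * ∏ j, M j (σ j) (τ j) =
      ∑ τ : Equiv.Perm (Fin n), det (of fun p q => M (τ.symm q) p q) := by
  rw [sum_comm]
  refine sum_congr rfl fun τ _ => ?_
  have hcol : (of fun p q => M (τ.symm q) p q).submatrix id τ = of fun p j => M j p (τ j) := by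
    ext p j; simp
  have hsign : (Equiv.Perm.sign τ : R) * Equiv.Perm.sign τ = 1 := by
    rw [← Int.cast_mul, ← Units.val_mul, Int.units_mul_self, Units.val_one, Int.cast_one]
  calc _ = Equiv.Perm.sign τ * det (of fun p j => M j p (τ j)) := by
        simp only [det_apply', mul_sum, of_apply]
        exact sum_congr rfl fun σ _ => by ring
    _ = _ := by rw [← hcol, det_permute', ← mul_assoc, hsign, one_mul]

lemma det_mul_det_comp_perm {α : Type*} (f g : Fin n → α → R)
    (x : Fin n → α) (σ : Equiv.Perm (Fin n)) :
    det (of fun i j => f i (x (σ j))) * det (of fun i j => g i (x (σ j))) =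
      det (of fun i j => f i (x j)) * det (of fun i j => g i (x j)) := by
  have hf := det_permute' σ (of fun i j => f i (x j))
  have hg := det_permute' σ (of fun i j => g i (x j))
  simp only [submatrix, of_apply, id] at hf hg
  rw [hf, hg, mul_mul_mul_comm, ← Int.cast_mul, ← Units.val_mul, Int.units_mul_self,
    Units.val_one, Int.cast_one, one_mul]

lemma det_mul_det_mul_prod_mul_sum_eq {α : Type*} (f g : Fin n → α → R) (ξ ξt : α → R)
    (x : Fin n → α) :
    det (of fun i j => f i (x j)) * det (of fun i j => g i (x j)) * (∏ m, ξ (x m)) *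
        ∑ i, ξt (x i) =
      ∑ k, det (of fun i j => f i (x j)) * det (of fun i j => g i (x j)) *
        ∏ j, (ξ (x j) * if j = k then ξt (x j) else 1) := by
  rw [mul_assoc, prod_mul_sum_eq_sum_prod_ite, mul_sum]

end Algebra

lemma volume_setOf_apply_eq_apply_eq_zero {ι : Type*} [Fintype ι] {i j : ι} (hij : i ≠ j) :
    volume {x : ι → ℝ | x i = x j} = 0 := by
  classical
  let L : (ι → ℝ) →ₗ[ℝ] ℝ :=
    LinearMap.proj (R := ℝ) (φ := fun _ => ℝ) i - LinearMap.proj j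
  have hL : {x : ι → ℝ | x i = x j} = LinearMap.ker L := by
    ext x; simp [L, sub_eq_zero]
  rw [hL]
  refine Measure.addHaar_submodule volume _ fun htop => ?_
  have : Pi.single i 1 ∈ LinearMap.ker L := htop ▸ Submodule.mem_top
  simp [L, hij.symm] at this

lemma measurableSet_setOf_antitone {ι : Type*} [Countable ι] [Preorder ι] :
    MeasurableSet {x : ι → ℝ | Antitone x} := by
  simp only [Antitone, Set.ofPred_forall]
  exact .iInter fun i => .iInter fun j => .iInter fun _ =>
    measurableSet_le (measurable_pi_apply j) (measurable_pi_apply i)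

lemma Tuple.exists_perm_antitone_comp {α : Type*} [LinearOrder α] {n : ℕ} (x : Fin n → α) :
    ∃ σ : Equiv.Perm (Fin n), Antitone (x ∘ σ) :=
  ⟨Fin.revPerm.trans (Tuple.sort x), (Tuple.monotone_sort x).comp_antitone Fin.rev_anti⟩

lemma aedisjoint_setOf_antitone_comp {n : ℕ} {σ τ : Equiv.Perm (Fin n)} (h : σ ≠ τ) :
    AEDisjoint volume {x : Fin n → ℝ | Antitone (x ∘ σ)} {x | Antitone (x ∘ τ)} := by
  obtain ⟨i, hi⟩ : ∃ i, σ i ≠ τ i := by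
    by_contra! h'
    exact h (Equiv.ext h')
  refine measure_mono_null (fun x hx => ?_) (volume_setOf_apply_eq_apply_eq_zero hi)
  exact congrFun (Tuple.unique_antitone hx.1 hx.2) i

theorem setIntegral_univ_pi_eq_factorial_mul_setIntegral_antitone {n : ℕ} {s : Set ℝ}
    (hs : MeasurableSet s) {F : (Fin n → ℝ) → ℝ}
    (hF : ∀ (σ : Equiv.Perm (Fin n)) x, F (x ∘ σ) = F x)
    (hFi : IntegrableOn F (Set.univ.pi fun _ => s)) :
    ∫ x in Set.univ.pi (fun _ => s), F x =
      n.factorial * ∫ x in {x : Fin n → ℝ | Antitone x ∧ ∀ i, x i ∈ s}, F x := by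
  set A := {x : Fin n → ℝ | Antitone x ∧ ∀ i, x i ∈ s}
  let e (σ : Equiv.Perm (Fin n)) := MeasurableEquiv.arrowCongr' σ.symm (MeasurableEquiv.refl ℝ)
  have he (σ) (x : Fin n → ℝ) : e σ x = x ∘ σ := by
    ext i; simp [e, MeasurableEquiv.arrowCongr', Equiv.arrowCongr']
  have hpre (σ) : e σ ⁻¹' A = {x | Antitone (x ∘ σ)} ∩ Set.univ.pi fun _ => s := by
    ext x
    simp only [A, Set.mem_preimage, he, Set.mem_ofPred_eq, Set.mem_inter_iff, Set.mem_univ_pi,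
      Function.comp_apply]
    exact and_congr_right fun _ => σ.forall_congr_right (q := fun i => x i ∈ s)
  have hA : MeasurableSet A := by
    have : A = {x | Antitone x} ∩ Set.univ.pi fun _ => s := by ext; simp [A]
    exact this ▸ measurableSet_setOf_antitone.inter (.univ_pi fun _ => hs)
  have hcover : Set.univ.pi (fun _ => s) = ⋃ σ, e σ ⁻¹' A := by
    ext x
    simp only [Set.mem_iUnion, hpre, Set.mem_inter_iff, Set.mem_ofPred_eq]
    exact ⟨fun hx => (Tuple.exists_perm_antitone_comp x).imp fun _ h => ⟨h, hx⟩,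
      fun ⟨_, h⟩ => h.2⟩
  have hpiece (σ) : ∫ x in e σ ⁻¹' A, F x = ∫ x in A, F x := by
    have hmp : MeasurePreserving (e σ) :=
      volume_preserving_arrowCongr' _ _ (by exact MeasurePreserving.id volume)
    rw [← hmp.setIntegral_preimage_emb (e σ).measurableEmbedding F A]
    simp only [he, hF]
  rw [hcover, integral_iUnion_ae (fun σ => (e σ).measurable hA |>.nullMeasurableSet)
    (fun σ τ h => (aedisjoint_setOf_antitone_comp h).mono (by simp [hpre]) (by simp [hpre]))
    (hcover ▸ hFi), tsum_fintype]
  simp [hpiece, Fintype.card_perm]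

section Andreief

variable {n : ℕ} {𝕜 α : Type*} [RCLike 𝕜] [MeasurableSpace α] {μ : Measure α}
  {f g w : Fin n → α → 𝕜} {ξ ξt : α → 𝕜}

lemma integrable_mul_mul_ite (hξ : ∀ p q, Integrable (fun t => f p t * g q t * ξ t) μ)
    (hξt : ∀ p q, Integrable (fun t => f p t * g q t * ξ t * ξt t) μ) (k p q j : Fin n) :
    Integrable (fun t => f p t * g q t * (ξ t * if j = k then ξt t else 1)) μ := by
  by_cases h : j = k <;> simp only [h, if_true, if_false, mul_one, ← mul_assoc]
  exacts [hξt p q, hξ p q]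

variable [SigmaFinite μ]

theorem integrable_det_mul_det_mul_prod
    (h : ∀ p q j, Integrable (fun t => f p t * g q t * w j t) μ) :
    Integrable (fun x : Fin n → α =>
      det (of fun i j => f i (x j)) * det (of fun i j => g i (x j)) * ∏ j, w j (x j))
      (Measure.pi fun _ => μ) := by
  simp only [det_mul_det_mul_prod_eq_sum, of_apply]
  exact integrable_finsetSum _ fun σ _ => integrable_finsetSum _ fun τ _ =>
    (Integrable.fintype_prod fun j => h (σ j) (τ j) j).const_mul _

/-- Andréief's identity, with a weight that depends on the coordinate. -/
theorem integral_det_mul_det_mul_prod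
    (h : ∀ p q j, Integrable (fun t => f p t * g q t * w j t) μ) :
    ∫ x, det (of fun i j => f i (x j)) * det (of fun i j => g i (x j)) * ∏ j, w j (x j)
        ∂(Measure.pi fun _ => μ) =
      ∑ τ : Equiv.Perm (Fin n),
        det (of fun p q => ∫ t, f p t * g q t * w (τ.symm q) t ∂μ) := by
  rw [← sum_sign_mul_sign_mul_prod_eq_sum_det (fun j p q => ∫ t, f p t * g q t * w j t ∂μ)]
  simp only [det_mul_det_mul_prod_eq_sum, of_apply]
  rw [integral_finsetSum _ fun σ _ => integrable_finsetSum _ fun τ _ =>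
    (Integrable.fintype_prod fun j => h (σ j) (τ j) j).const_mul _]
  refine sum_congr rfl fun σ _ => ?_
  rw [integral_finsetSum _ fun τ _ =>
    (Integrable.fintype_prod fun j => h (σ j) (τ j) j).const_mul _]
  refine sum_congr rfl fun τ _ => ?_
  rw [integral_const_mul, integral_fintype_prod_eq_prod
    (fun j t => f (σ j) t * g (τ j) t * w j t)]

theorem integrable_det_mul_det_mul_prod_mul_sum
    (hξ : ∀ p q, Integrable (fun t => f p t * g q t * ξ t) μ)
    (hξt : ∀ p q, Integrable (fun t => f p t * g q t * ξ t * ξt t) μ) :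
    Integrable (fun x : Fin n → α => det (of fun i j => f i (x j)) *
      det (of fun i j => g i (x j)) * (∏ m, ξ (x m)) * ∑ i, ξt (x i))
      (Measure.pi fun _ => μ) := by
  simp only [det_mul_det_mul_prod_mul_sum_eq]
  exact integrable_finsetSum _ fun k _ =>
    integrable_det_mul_det_mul_prod (integrable_mul_mul_ite hξ hξt k)

theorem integral_det_mul_det_mul_prod_mul_sum
    (hξ : ∀ p q, Integrable (fun t => f p t * g q t * ξ t) μ)
    (hξt : ∀ p q, Integrable (fun t => f p t * g q t * ξ t * ξt t) μ) :
    ∫ x, det (of fun i j => f i (x j)) * det (of fun i j => g i (x j)) * (∏ m, ξ (x m)) *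
        ∑ i, ξt (x i) ∂(Measure.pi fun _ => μ) =
      n.factorial * ∑ k, det (of fun i j =>
        ∫ t, f i t * g j t * ξ t * (if j = k then ξt t else 1) ∂μ) := by
  set B : Fin n → 𝕜 := fun k => det (of fun i j =>
    ∫ t, f i t * g j t * ξ t * (if j = k then ξt t else 1) ∂μ)
  have hB (k : Fin n) (τ : Equiv.Perm (Fin n)) : det (of fun p q =>
      ∫ t, f p t * g q t * (ξ t * if τ.symm q = k then ξt t else 1) ∂μ) = B (τ k) := by
    simp only [B, Equiv.symm_apply_eq, mul_assoc]
  calc _ = ∑ k, ∑ τ : Equiv.Perm (Fin n), B (τ k) := by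
        simp only [det_mul_det_mul_prod_mul_sum_eq]
        rw [integral_finsetSum _ fun k _ =>
          integrable_det_mul_det_mul_prod (integrable_mul_mul_ite hξ hξt k)]
        simp only [integral_det_mul_det_mul_prod (integrable_mul_mul_ite hξ hξt _), hB]
    _ = ∑ τ : Equiv.Perm (Fin n), ∑ k, B k := by
        rw [sum_comm]
        exact sum_congr rfl fun τ _ => Equiv.sum_comp τ B
    _ = n.factorial * ∑ k, B k := by
        rw [sum_const, card_univ, Fintype.card_perm, Fintype.card_fin, nsmul_eq_mul]

end Andreief

theorem stmt_9_general (n : ℕ) (a b : ℝ)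
    (Φ Ψ : Fin n → ℝ → ℝ) (ξ ξt : ℝ → ℝ)
    (hint : ∀ i j, IntegrableOn (fun t => Φ i t * Ψ j t * ξ t) (Set.Icc a b))
    (hint' : ∀ i j,
      IntegrableOn (fun t => Φ i t * Ψ j t * ξ t * ξt t) (Set.Icc a b)) :
    (∫ x in {x : Fin n → ℝ |
        (∀ i j : Fin n, i ≤ j → x j ≤ x i) ∧ ∀ i, x i ∈ Set.Icc a b},
      Matrix.det (Matrix.of fun i j : Fin n => Φ i (x j)) *
        Matrix.det (Matrix.of fun i j : Fin n => Ψ i (x j)) *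
        (∏ m, ξ (x m)) * (∑ i, ξt (x i))) =
      ∑ k : Fin n,
        Matrix.det (Matrix.of fun i j : Fin n =>
          ∫ t in Set.Icc a b,
            Φ i t * Ψ j t * ξ t * (if j = k then ξt t else 1)) := by
  set F : (Fin n → ℝ) → ℝ := fun x => det (of fun i j => Φ i (x j)) *
    det (of fun i j => Ψ i (x j)) * (∏ m, ξ (x m)) * ∑ i, ξt (x i)
  have hsym (σ : Equiv.Perm (Fin n)) (x : Fin n → ℝ) : F (x ∘ σ) = F x := by
    simp only [F, det_mul_det_comp_perm, Function.comp_apply,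
      Equiv.prod_comp σ (fun m => ξ (x m)), Equiv.sum_comp σ (fun i => ξt (x i))]
  have hpi : volume.restrict (Set.univ.pi fun _ : Fin n => Set.Icc a b) =
      Measure.pi fun _ => volume.restrict (Set.Icc a b) :=
    Measure.restrict_pi_pi _ _
  have hFi : IntegrableOn F (Set.univ.pi fun _ => Set.Icc a b) := by
    rw [IntegrableOn, hpi]
    exact integrable_det_mul_det_mul_prod_mul_sum hint hint'
  have hcube :=
    setIntegral_univ_pi_eq_factorial_mul_setIntegral_antitone measurableSet_Icc hsym hFi
  rw [hpi, integral_det_mul_det_mul_prod_mul_sum hint hint'] at hcube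
  exact mul_left_cancel₀ (Nat.cast_ne_zero.2 n.factorial_ne_zero) hcube.symm

/-- Special case (p = n, no constant border) of the determinant multiple-integral
identity (Theorem 2 of Chiani–Win–Shin):
`∫_{b ≥ x₁ ≥ … ≥ x_n ≥ a} det[Φᵢ(x_j)] det[Ψᵢ(x_j)] ∏_m ξ(x_m) · Σ_i ξ̃(x_i) dx
 = Σ_{k=1}^n det[ ∫_a^b Φᵢ(x) Ψⱼ(x) ξ(x) (ξ̃(x) if j = k else 1) dx ]`. -/
theorem stmt_9 (n : ℕ) (a b : ℝ) (hab : a ≤ b)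
    (Φ Ψ : Fin n → ℝ → ℝ) (ξ ξt : ℝ → ℝ)
    (hΦ : ∀ i, Measurable (Φ i)) (hΨ : ∀ i, Measurable (Ψ i))
    (hξ : Measurable ξ) (hξt : Measurable ξt)
    (hint : ∀ i j, IntegrableOn (fun t => Φ i t * Ψ j t * ξ t) (Set.Icc a b))
    (hint' : ∀ i j,
      IntegrableOn (fun t => Φ i t * Ψ j t * ξ t * ξt t) (Set.Icc a b)) :
    (∫ x in {x : Fin n → ℝ |
        (∀ i j : Fin n, i ≤ j → x j ≤ x i) ∧ ∀ i, x i ∈ Set.Icc a b},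
      Matrix.det (Matrix.of fun i j : Fin n => Φ i (x j)) *
        Matrix.det (Matrix.of fun i j : Fin n => Ψ i (x j)) *
        (∏ m, ξ (x m)) * (∑ i, ξt (x i))) =
      ∑ k : Fin n,
        Matrix.det (Matrix.of fun i j : Fin n =>
          ∫ t in Set.Icc a b,
            Φ i t * Ψ j t * ξ t * (if j = k then ξt t else 1)) :=
  stmt_9_general n a b Φ Ψ ξ ξt hint hint'
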